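/- arXiv:math/0503120 — 3 statements merged into one kernel-verified Lean document; each statement's English description precedes it below -/
import Mathlib

section
/- Let 0 < q < 1, let ν be a positive integer, let z ∈ D_q and let t ∈ R_q(z). Then F_q^{+,ν}(q·t, z) = e^{−t}·( F_q^{+,ν}(t,z) + t^ν·q^{ν(1−z)}·e^{t·[1−z]_q} ). -/
/-!
Writing `w = t q^{-z}`, the exponent of the `n`-th term is `(t - w q^{-n}) / (1 - q)`.
The condition `t ∈ R_q(z)` forces `Re w > 0`, which makes the terms decay like
`q^{-νn} exp(-Re w q^{-n} / (1 - q))`, so the series converges. Replacing `t` by `q t` turns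
the term of index `n + 1` into `q^{-ν} e^{-t}` times the term of index `n`, so `F(q t, z)` is
its own `n = 0` term plus `e^{-t} F(t, z)`.
-/

open Complex

/-- `q^w := exp(w · log q)` with the real logarithm of `q`. -/
noncomputable def qpow (q : ℝ) (w : ℂ) : ℂ := Complex.exp (w * Real.log q)

/-- `[w]_q := (1 - q^w)/(1 - q)`. -/
noncomputable def qbr (q : ℝ) (w : ℂ) : ℂ := (1 - qpow q w) / (1 - (q : ℂ))

/-- the `n`-th term of the series defining `F_q^{+,ν}(t,z)`. -/
noncomputable def FpTerm (q : ℝ) (ν : ℕ) (t z : ℂ) (n : ℕ) : ℂ :=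
  qpow q (-(ν : ℂ) * ((n : ℂ) + z)) *
    Complex.exp (-t * qpow q (-((n : ℂ) + z)) * qbr q ((n : ℂ) + z))

/-- `F_q^{+,ν}(t,z)`. -/
noncomputable def Fp (q : ℝ) (ν : ℕ) (t z : ℂ) : ℂ := t ^ ν * ∑' n : ℕ, FpTerm q ν t z n

lemma qpow_add (q : ℝ) (a b : ℂ) : qpow q (a + b) = qpow q a * qpow q b := by
  simp only [qpow, add_mul, Complex.exp_add]

lemma qpow_neg (q : ℝ) (w : ℂ) : qpow q (-w) = (qpow q w)⁻¹ := by
  rw [qpow, neg_mul, Complex.exp_neg, qpow]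

lemma qpow_ne_zero (q : ℝ) (w : ℂ) : qpow q w ≠ 0 := Complex.exp_ne_zero _

lemma qpow_natCast {q : ℝ} (hq : 0 < q) (n : ℕ) : qpow q n = (q : ℂ) ^ n := by
  rw [qpow, Complex.exp_nat_mul, ← Complex.ofReal_exp, Real.exp_log hq]

lemma qpow_one {q : ℝ} (hq : 0 < q) : qpow q 1 = q := by
  simpa using qpow_natCast hq 1

lemma re_mul_exp (t u : ℂ) :
    (t * Complex.exp u).re = ‖t‖ * Real.exp u.re * Real.cos (t.arg + u.im) := by
  rw [Real.cos_add, mul_re, exp_re, exp_im]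
  linear_combination -(Real.exp u.re * Real.cos u.im) * norm_mul_cos_arg t +
    (Real.exp u.re * Real.sin u.im) * norm_mul_sin_arg t

lemma re_mul_qpow_neg_pos {q : ℝ} {t : ℂ} (z : ℂ) (ht : t ≠ 0)
    (harg : |t.arg - z.im * Real.log q| < Real.pi / 2) : 0 < (t * qpow q (-z)).re := by
  have hcos : 0 < Real.cos (t.arg + (-z * Real.log q).im) := by
    apply Real.cos_pos_of_mem_Ioo
    simp only [neg_mul, neg_im, mul_im, ofReal_re, ofReal_im, mul_zero]
    constructor <;> linarith [abs_lt.mp harg]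
  rw [qpow, re_mul_exp]
  have := norm_pos_iff.mpr ht
  positivity

lemma neg_mul_qpow_neg_mul_qbr (q : ℝ) (t w : ℂ) :
    -t * qpow q (-w) * qbr q w = t * (1 - qpow q (-w)) / (1 - q) := by
  have := qpow_ne_zero q w
  rw [qbr, qpow_neg]
  field_simp
  ring

lemma FpTerm_eq (q : ℝ) (ν : ℕ) (t z : ℂ) (n : ℕ) :
    FpTerm q ν t z n = qpow q (-(ν : ℂ) * ((n : ℂ) + z)) *
      Complex.exp (t * (1 - qpow q (-((n : ℂ) + z))) / (1 - q)) := by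
  rw [FpTerm, neg_mul_qpow_neg_mul_qbr]

lemma qpow_neg_add_one {q : ℝ} (hq : 0 < q) (w : ℂ) : qpow q (-(w + 1)) = qpow q (-w) / q := by
  rw [neg_add, qpow_add, qpow_neg q 1, qpow_one hq, div_eq_mul_inv]

section Recurrences

variable {q : ℝ} (hq0 : 0 < q) (hq1 : q < 1) (ν : ℕ) (t z : ℂ)
include hq0 hq1

lemma FpTerm_succ (n : ℕ) :
    FpTerm q ν t z (n + 1) =
      qpow q (-(ν : ℂ)) * Complex.exp (-(t * qpow q (-z)) / (q : ℂ) ^ (n + 1)) *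
        FpTerm q ν t z n := by
  have hq : (q : ℂ) ≠ 0 := by exact_mod_cast hq0.ne'
  have hq1' : (1 : ℂ) - q ≠ 0 := sub_ne_zero.mpr (by exact_mod_cast hq1.ne')
  have hpow : qpow q (-((n : ℂ) + z)) = qpow q (-z) / (q : ℂ) ^ n := by
    rw [neg_add, qpow_add, qpow_neg q n, qpow_natCast hq0]
    ring
  simp only [FpTerm_eq, Nat.cast_succ, add_right_comm _ (1 : ℂ) z, qpow_neg_add_one hq0]
  rw [hpow, mul_mul_mul_comm, ← Complex.exp_add, ← qpow_add]
  congr 2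
  · ring
  · field_simp
    ring

lemma FpTerm_mul_succ (n : ℕ) :
    FpTerm q ν ((q : ℂ) * t) z (n + 1) =
      qpow q (-(ν : ℂ)) * Complex.exp (-t) * FpTerm q ν t z n := by
  have hq : (q : ℂ) ≠ 0 := by exact_mod_cast hq0.ne'
  have hq1' : (1 : ℂ) - q ≠ 0 := sub_ne_zero.mpr (by exact_mod_cast hq1.ne')
  simp only [FpTerm_eq, Nat.cast_succ, add_right_comm _ (1 : ℂ) z, qpow_neg_add_one hq0]
  rw [mul_mul_mul_comm, ← Complex.exp_add, ← qpow_add]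
  congr 2
  · ring
  · field_simp
    ring

lemma FpTerm_mul_zero :
    FpTerm q ν ((q : ℂ) * t) z 0 =
      qpow q (-(ν : ℂ) * z) * Complex.exp (-t) * Complex.exp (t * qbr q (1 - z)) := by
  have hq : (q : ℂ) ≠ 0 := by exact_mod_cast hq0.ne'
  have hq1' : (1 : ℂ) - q ≠ 0 := sub_ne_zero.mpr (by exact_mod_cast hq1.ne')
  have hpow : qpow q (1 - z) = q * qpow q (-z) := by
    rw [sub_eq_add_neg, qpow_add, qpow_one hq0]
  rw [FpTerm_eq, mul_assoc (qpow q _), ← Complex.exp_add, qbr, hpow]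
  simp only [Nat.cast_zero, zero_add]
  congr 2
  field_simp
  ring

end Recurrences

lemma summable_FpTerm {q : ℝ} (hq0 : 0 < q) (hq1 : q < 1) (ν : ℕ) {t z : ℂ}
    (hpos : 0 < (t * qpow q (-z)).re) : Summable (FpTerm q ν t z) := by
  set δ := (t * qpow q (-z)).re
  set K := ‖qpow q (-(ν : ℂ))‖
  have hratio (n : ℕ) :
      ‖FpTerm q ν t z (n + 1)‖ = K * Real.exp (-δ * (q⁻¹) ^ (n + 1)) * ‖FpTerm q ν t z n‖ := by
    rw [FpTerm_succ hq0 hq1, norm_mul, norm_mul, Complex.norm_exp,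
      show (q : ℂ) ^ (n + 1) = ((q ^ (n + 1) : ℝ) : ℂ) by push_cast; rfl, div_ofReal_re,
      neg_re, inv_pow, div_eq_mul_inv]
  have hdecay : Filter.Tendsto (fun n : ℕ => K * Real.exp (-δ * (q⁻¹) ^ (n + 1)))
      Filter.atTop (nhds 0) := by
    have hgrow : Filter.Tendsto (fun n : ℕ => (q⁻¹) ^ (n + 1)) Filter.atTop Filter.atTop :=
      (tendsto_pow_atTop_atTop_of_one_lt ((one_lt_inv₀ hq0).mpr hq1)).comp
        (Filter.tendsto_add_atTop_nat 1)
    simpa using (Real.tendsto_exp_atBot.comp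
      (hgrow.const_mul_atTop_of_neg (neg_neg_of_pos hpos))).const_mul K
  refine summable_of_ratio_norm_eventually_le (r := 1 / 2) (by norm_num) ?_
  filter_upwards [hdecay.eventually_lt_const (by norm_num : (0 : ℝ) < 1 / 2)] with n hn
  rw [hratio n]
  exact mul_le_mul_of_nonneg_right hn.le (norm_nonneg _)

theorem stmt2_general (q : ℝ) (hq0 : 0 < q) (hq1 : q < 1) (ν : ℕ)
    (z : ℂ)
    (t : ℂ) (ht : t ≠ 0 ∧ |t.arg - z.im * Real.log q| < Real.pi / 2) :
    Fp q ν ((q : ℂ) * t) z =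
      Complex.exp (-t) *
        (Fp q ν t z + t ^ ν * qpow q ((ν : ℂ) * (1 - z)) * Complex.exp (t * qbr q (1 - z))) := by
  have hsum : Summable (FpTerm q ν t z) :=
    summable_FpTerm hq0 hq1 ν (re_mul_qpow_neg_pos z ht.1 ht.2)
  have hshift : Summable fun n => FpTerm q ν ((q : ℂ) * t) z (n + 1) := by
    simpa only [FpTerm_mul_succ hq0 hq1] using hsum.mul_left _
  have hqν : qpow q ν * qpow q (-(ν : ℂ)) = 1 := by
    rw [← qpow_add, add_neg_cancel, qpow, zero_mul, Complex.exp_zero]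
  have hqνz : qpow q ν * qpow q (-(ν : ℂ) * z) = qpow q ((ν : ℂ) * (1 - z)) := by
    rw [← qpow_add]
    congr 1
    ring
  rw [Fp, Fp, tsum_eq_zero_add' hshift, FpTerm_mul_zero hq0 hq1,
    tsum_congr (FpTerm_mul_succ hq0 hq1 ν t z), tsum_mul_left, mul_pow, ← qpow_natCast hq0]
  linear_combination (t ^ ν * Complex.exp (-t) * Complex.exp (t * qbr q (1 - z))) * hqνz +
    (t ^ ν * Complex.exp (-t) * ∑' n, FpTerm q ν t z n) * hqν

theorem stmt2 (q : ℝ) (hq0 : 0 < q) (hq1 : q < 1) (ν : ℕ) (hν : 0 < ν)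
    (z : ℂ) (hz : |z.im| < Real.pi / (2 * |Real.log q|))
    (t : ℂ) (ht : t ≠ 0 ∧ |t.arg - z.im * Real.log q| < Real.pi / 2) :
    Fp q ν ((q : ℂ) * t) z =
      Complex.exp (-t) *
        (Fp q ν t z + t ^ ν * qpow q ((ν : ℂ) * (1 - z)) * Complex.exp (t * qbr q (1 - z))) :=
  stmt2_general q hq0 hq1 ν z t ht
end

section
/- Let 0 < q < 1, let ν be a positive integer, let z ∈ J_q and let α ∈ ℂ with Re(α) > 0. Then the function t ↦ t^α·F_q^{+,ν}(t,z) (with t^α := exp(α·log t) for real t > 0) is integrable on the interval (0, ∞). -/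
open Complex MeasureTheory

/-!
On `t > 0` the `n`-th term of `t^α F_q^{+,ν}(t,z)` has modulus
`q^{-ν(n+x)} t^{Re α + ν} e^{-R_n t}` with `R_n = Re (q^{-(n+z)} [n+z]_q)`. Since
`R_n ≥ q^{-n} R_0` and `R_0 > 0` is exactly the condition `q^{-x} cos (y log q) > 1` defining
`J_q`, the integral of this modulus, `Γ(Re α + ν + 1) q^{-ν(n+x)} R_n^{-(Re α + ν + 1)}`, is
`O(q^{n(Re α + 1)})`. So the integrals of the moduli are summable and the series may be integrated
term by term.
-/

theorem MeasureTheory.integrable_tsum_of_summable_integral_norm {α E : Type*}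
    [MeasurableSpace α] {μ : Measure α} [NormedAddCommGroup E] [CompleteSpace E]
    {F : ℕ → α → E} (hF_int : ∀ i, Integrable (F i) μ)
    (hF_sum : Summable fun i ↦ ∫ a, ‖F i a‖ ∂μ) :
    Integrable (fun a ↦ ∑' i, F i a) μ := by
  have h_enorm i : AEMeasurable (fun a ↦ ‖F i a‖ₑ) μ := (hF_int i).1.enorm
  have h_lintegral : ∫⁻ a, ∑' i, ‖F i a‖ₑ ∂μ < ⊤ := by
    rw [lintegral_tsum h_enorm,
      ← funext fun i ↦ ofReal_integral_norm_eq_lintegral_enorm (hF_int i),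
      ← ENNReal.ofReal_tsum_of_nonneg (fun i ↦ integral_nonneg fun a ↦ norm_nonneg _) hF_sum]
    exact ENNReal.ofReal_lt_top
  have h_summable : ∀ᵐ a ∂μ, Summable fun i ↦ F i a := by
    filter_upwards [ae_lt_top' (AEMeasurable.tsum h_enorm) h_lintegral.ne] with a ha
    exact (tsum_enorm_ne_top_iff_summable_norm.1 ha.ne).of_norm
  refine ⟨aestronglyMeasurable_of_tendsto_ae Filter.atTop
    (fun N ↦ Finset.aestronglyMeasurable_sum (Finset.range N) fun i _ ↦ (hF_int i).1) ?_, ?_⟩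
  · filter_upwards [h_summable] with a ha
    simpa only [Finset.sum_apply] using ha.hasSum.tendsto_sum_nat
  · exact (lintegral_mono fun a ↦ enorm_tsum_le_tsum_enorm).trans_lt h_lintegral

open Set in
theorem integrableOn_Ioi_tsum_of_norm_le_rpow_mul_exp {E : Type*} [NormedAddCommGroup E]
    [CompleteSpace E] {F : ℕ → ℝ → E} {D B : ℕ → ℝ} {s : ℝ} (hs : -1 < s)
    (hB : ∀ n, 0 < B n) (hF_meas : ∀ n, AEStronglyMeasurable (F n) (volume.restrict (Ioi 0)))
    (hF_le : ∀ n, ∀ t ∈ Ioi (0 : ℝ), ‖F n t‖ ≤ D n * (t ^ s * Real.exp (-(B n * t))))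
    (hD : Summable fun n ↦ D n * (1 / B n) ^ (s + 1)) :
    IntegrableOn (fun t ↦ ∑' n, F n t) (Ioi 0) := by
  set G : ℕ → ℝ → ℝ := fun n t ↦ D n * (t ^ s * Real.exp (-(B n * t)))
  have hG_int n : IntegrableOn (G n) (Ioi 0) := by
    have h := (integrableOn_rpow_mul_exp_neg_mul_rpow hs zero_lt_one (hB n)).const_mul (D n)
    simp only [Real.rpow_one, neg_mul] at h
    exact h
  have hF_le_G n : ∀ᵐ t ∂volume.restrict (Ioi 0), ‖F n t‖ ≤ G n t :=
    (ae_restrict_iff' measurableSet_Ioi).2 (.of_forall (hF_le n))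
  have hG_integral n :
      ∫ t in Ioi 0, G n t = D n * (1 / B n) ^ (s + 1) * Real.Gamma (s + 1) := by
    rw [integral_const_mul, mul_assoc, ← add_sub_cancel_right s 1,
      Real.integral_rpow_mul_exp_neg_mul_Ioi (by linarith) (hB n), add_sub_cancel_right]
  have hF_int n : Integrable (F n) (volume.restrict (Ioi 0)) :=
    (hG_int n).mono' (hF_meas n) (hF_le_G n)
  refine integrable_tsum_of_summable_integral_norm hF_int ?_
  refine (hD.mul_right (Real.Gamma (s + 1))).of_nonneg_of_le
    (fun n ↦ integral_nonneg fun t ↦ norm_nonneg _) fun n ↦ ?_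
  rw [← hG_integral]
  exact integral_mono_ae (hF_int n).norm (hG_int n) (hF_le_G n)

/-- `Re (q^{-w} [w]_q)` at `w = n + z`. -/
noncomputable def FpRate (q : ℝ) (z : ℂ) (n : ℕ) : ℝ :=
  (q ^ (-(n + z.re)) * Real.cos (z.im * Real.log q) - 1) / (1 - q)

theorem qpow_neg_mul_qbr (q : ℝ) (w : ℂ) :
    qpow q (-w) * qbr q w = (qpow q (-w) - 1) / (1 - q) := by
  rw [qbr, ← mul_div_assoc, mul_sub, qpow, qpow, ← Complex.exp_add, ← add_mul, neg_add_cancel,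
    zero_mul, Complex.exp_zero, mul_one]

section

variable {q : ℝ}

theorem norm_qpow (hq : 0 < q) (w : ℂ) : ‖qpow q w‖ = q ^ w.re := by
  rw [qpow, Complex.norm_exp, Real.rpow_def_of_pos hq, mul_comm]
  simp

theorem re_qpow (hq : 0 < q) (w : ℂ) :
    (qpow q w).re = q ^ w.re * Real.cos (w.im * Real.log q) := by
  rw [qpow, Complex.exp_re, Real.rpow_def_of_pos hq, mul_comm (Real.log q)]
  simp

theorem norm_FpTerm (hq : 0 < q) (ν : ℕ) (z : ℂ) (n : ℕ) (t : ℝ) :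
    ‖FpTerm q ν t z n‖ = q ^ (-(ν * (n + z.re))) * Real.exp (-(FpRate q z n * t)) := by
  rw [FpTerm, mul_assoc (-(t : ℂ)), qpow_neg_mul_qbr, norm_mul, norm_qpow hq, Complex.norm_exp]
  congr 2
  · simp
  · rw [← Complex.ofReal_one, ← Complex.ofReal_sub, mul_div_assoc', Complex.div_ofReal_re]
    simp only [neg_add_rev, ofReal_one, neg_mul, neg_re, mul_re, ofReal_re, sub_re, re_qpow hq,
      add_re, natCast_re, add_im, neg_im, natCast_im, neg_zero, add_zero, Real.cos_neg, one_re,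
      ofReal_im, sub_im, one_im, sub_zero, zero_mul, FpRate]
    ring

theorem norm_exp_log_mul_pow_mul_FpTerm (hq : 0 < q) (ν : ℕ) (z α : ℂ) (n : ℕ) {t : ℝ}
    (ht : 0 < t) :
    ‖exp (α * Real.log t) * ((t : ℂ) ^ ν * FpTerm q ν t z n)‖ =
      q ^ (-(ν * (n + z.re))) * (t ^ (α.re + ν) * Real.exp (-(FpRate q z n * t))) := by
  rw [norm_mul, norm_mul, norm_FpTerm hq, Complex.norm_exp, norm_pow, Complex.norm_real,
    Real.norm_of_nonneg ht.le, Real.rpow_add ht, Real.rpow_natCast, Real.rpow_def_of_pos ht]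
  simp only [mul_re, ofReal_re, ofReal_im, mul_zero, sub_zero]
  ring_nf

theorem rpow_neg_mul_FpRate_zero_le (hq0 : 0 < q) (hq1 : q < 1) (z : ℂ) (n : ℕ) :
    q ^ (-(n : ℝ)) * FpRate q z 0 ≤ FpRate q z n := by
  have h_one : 1 ≤ q ^ (-(n : ℝ)) :=
    Real.one_le_rpow_of_pos_of_le_one_of_nonpos hq0 hq1.le (by simp)
  have h_split : q ^ (-(n + z.re)) = q ^ (-(n : ℝ)) * q ^ (-z.re) := by
    rw [← Real.rpow_add hq0, neg_add]
  rw [FpRate, FpRate, h_split, Nat.cast_zero, zero_add, mul_div_assoc', mul_sub, mul_one,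
    ← mul_assoc]
  gcongr

theorem FpRate_zero_pos (hq1 : q < 1) {z : ℂ}
    (hz : 1 < q ^ (-z.re) * Real.cos (z.im * Real.log q)) : 0 < FpRate q z 0 := by
  rw [FpRate, Nat.cast_zero, zero_add]
  exact div_pos (by linarith) (by linarith)

theorem FpRate_pos (hq0 : 0 < q) (hq1 : q < 1) {z : ℂ}
    (hz : 1 < q ^ (-z.re) * Real.cos (z.im * Real.log q)) (n : ℕ) : 0 < FpRate q z n :=
  (mul_pos (Real.rpow_pos_of_pos hq0 _) (FpRate_zero_pos hq1 hz)).trans_le (rpow_neg_mul_FpRate_zero_le hq0 hq1 z n)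

theorem summable_rpow_mul_inv_FpRate_rpow (hq0 : 0 < q) (hq1 : q < 1) {z : ℂ}
    (hz : 1 < q ^ (-z.re) * Real.cos (z.im * Real.log q)) (ν : ℕ) {s : ℝ} (hs : ν < s + 1) :
    Summable fun n : ℕ ↦ q ^ (-(ν * (n + z.re))) * (1 / FpRate q z n) ^ (s + 1) := by
  set c := FpRate q z 0
  have hc : 0 < c := FpRate_zero_pos hq1 hz
  have hs1 : 0 < s + 1 := lt_of_le_of_lt (Nat.cast_nonneg ν) hs
  have h_geom : Summable fun n : ℕ ↦
      q ^ (-(ν * z.re)) * (1 / c) ^ (s + 1) * (q ^ (s + 1 - ν)) ^ n :=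
    (summable_geometric_of_lt_one (by positivity)
      (Real.rpow_lt_one hq0.le hq1 (by linarith))).mul_left _
  refine h_geom.of_nonneg_of_le (fun n ↦ ?_) (fun n ↦ ?_)
  · have := FpRate_pos hq0 hq1 hz n
    positivity
  have h_rate : 1 / FpRate q z n ≤ q ^ (n : ℝ) * (1 / c) := calc
    1 / FpRate q z n ≤ 1 / (q ^ (-(n : ℝ)) * c) :=
      one_div_le_one_div_of_le (mul_pos (Real.rpow_pos_of_pos hq0 _) hc) (rpow_neg_mul_FpRate_zero_le hq0 hq1 z n)
    _ = q ^ (n : ℝ) * (1 / c) := by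
      rw [Real.rpow_neg hq0.le]
      field_simp
  have h_exp : q ^ (-(ν * (n + z.re))) * q ^ (n * (s + 1)) =
      q ^ (-(ν * z.re)) * q ^ ((s + 1 - ν) * n) := by
    rw [← Real.rpow_add hq0, ← Real.rpow_add hq0]
    ring_nf
  have := FpRate_pos hq0 hq1 hz n
  calc q ^ (-(ν * (n + z.re))) * (1 / FpRate q z n) ^ (s + 1)
      ≤ q ^ (-(ν * (n + z.re))) * (q ^ (n : ℝ) * (1 / c)) ^ (s + 1) := by gcongr
    _ = q ^ (-(ν * z.re)) * (1 / c) ^ (s + 1) * (q ^ (s + 1 - ν)) ^ n := by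
      rw [Real.mul_rpow (by positivity) (by positivity), ← Real.rpow_mul hq0.le,
        ← Real.rpow_natCast, ← Real.rpow_mul hq0.le]
      linear_combination (1 / c) ^ (s + 1) * h_exp

end

theorem stmt5_general (q : ℝ) (hq0 : 0 < q) (hq1 : q < 1) (ν : ℕ) (z : ℂ)
    (hz' : 0 < z.re ∧ 1 < q ^ (-z.re) * Real.cos (z.im * Real.log q))
    (α : ℂ) (hα : 0 < α.re) :
    IntegrableOn (fun t : ℝ => Complex.exp (α * Real.log t) * Fp q ν (t : ℂ) z)
      (Set.Ioi (0 : ℝ)) := by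
  have h_tsum := integrableOn_Ioi_tsum_of_norm_le_rpow_mul_exp
    (F := fun n t ↦ exp (α * Real.log t) * ((t : ℂ) ^ ν * FpTerm q ν t z n))
    (by linarith [ν.cast_nonneg (α := ℝ)] : -1 < α.re + ν) (FpRate_pos hq0 hq1 hz'.2)
    (fun n ↦ by unfold FpTerm; fun_prop)
    (fun n t ht ↦ (norm_exp_log_mul_pow_mul_FpTerm hq0 ν z α n ht).le)
    (summable_rpow_mul_inv_FpRate_rpow hq0 hq1 hz'.2 ν (by linarith))
  refine h_tsum.congr_fun (fun t _ ↦ ?_) measurableSet_Ioi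
  simp only [Fp, tsum_mul_left]

theorem stmt5 (q : ℝ) (hq0 : 0 < q) (hq1 : q < 1) (ν : ℕ) (hν : 0 < ν)
    (z : ℂ) (hz : |z.im| < Real.pi / (2 * |Real.log q|))
    (hz' : 0 < z.re ∧ 1 < q ^ (-z.re) * Real.cos (z.im * Real.log q))
    (α : ℂ) (hα : 0 < α.re) :
    IntegrableOn (fun t : ℝ => Complex.exp (α * Real.log t) * Fp q ν (t : ℂ) z)
      (Set.Ioi (0 : ℝ)) :=
  stmt5_general q hq0 hq1 ν z hz' α hα
end

section
/- Let 0 < q < 1, let ν be a positive integer, let z > 0 be real and let n be an integer with 1 ≤ n ≤ ν. Then, as the real non-integer variable s tends to n, the quantity (s − n)·(1−q)^s·Σ_{l=0}^∞ ((s)_l/l!)·q^{z(s−ν+l)}/(1 − q^{s−ν+l}) converges to −C(ν−1, ν−n)·(1−q)^n/log q. (This expresses that the meromorphic continuation of ζ_q^{(ν)}(s,z) has a simple pole at s = n with residue −C(ν−1,ν−n)·(1−q)^n/log q.) -/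
open Complex Filter

/-!
For real `s` every summand is real. Near `s = n` only the term `l = ν - n` has a vanishing
denominator, `1 - q^(s-n) ~ -(s - n) log q`, which produces the pole; its coefficient
`(s)_(ν-n)/(ν-n)!` tends to `(n)_(ν-n)/(ν-n)! = C(ν-1, ν-n)`. For every other `l` we have
`|s - ν + l| ≥ 1/2`, so the denominator stays away from `0` and the term is dominated, uniformly
in `s`, by a multiple of `C(l+n, n) (q^z)^l`; the rest of the series is therefore bounded and
killed by the factor `s - n`.
-/

open Topology

theorem abs_ascPochhammer_eval_le {s t : ℝ} (h : |s| ≤ t) (l : ℕ) :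
    |(ascPochhammer ℝ l).eval s| ≤ (ascPochhammer ℝ l).eval t := by
  induction l with
  | zero => simp
  | succ l ih =>
    rw [ascPochhammer_succ_eval, ascPochhammer_succ_eval, abs_mul]
    have hsl : |s + l| ≤ t + l := (abs_add_le s l).trans (by rw [Nat.abs_cast]; linarith)
    exact mul_le_mul ih hsl (abs_nonneg _) ((abs_nonneg _).trans ih)

theorem ascPochhammer_eval_natCast_div_factorial (n l : ℕ) :
    (ascPochhammer ℝ l).eval (n : ℝ) / l.factorial = (n + l - 1).choose l := by
  rw [← ascPochhammer_eval_cast, ascPochhammer_nat_eq_ascFactorial,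
    Nat.ascFactorial_eq_factorial_mul_choose', Nat.cast_mul,
    mul_div_cancel_left₀ _ (by positivity)]

theorem one_sub_rpow_abs_le_abs_one_sub_rpow {q : ℝ} (hq0 : 0 < q) (hq1 : q ≤ 1) (x : ℝ) :
    1 - q ^ |x| ≤ |1 - q ^ x| := by
  rcases le_or_gt 0 x with hx | hx
  · rw [abs_of_nonneg hx]
    exact le_abs_self _
  · have h1 : 1 ≤ q ^ x := Real.one_le_rpow_of_pos_of_le_one_of_nonpos hq0 hq1 hx.le
    have h2 : q ^ |x| ≤ 1 := Real.rpow_le_one hq0.le hq1 (abs_nonneg x)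
    have h3 : q ^ x * q ^ |x| = 1 := by
      rw [abs_of_neg hx, ← Real.rpow_add hq0, add_neg_cancel, Real.rpow_zero]
    calc 1 - q ^ |x| ≤ q ^ x * (1 - q ^ |x|) := le_mul_of_one_le_left (by linarith) h1
      _ = q ^ x - 1 := by rw [mul_sub, h3, mul_one]
      _ ≤ |1 - q ^ x| := by rw [abs_sub_comm]; exact le_abs_self _

theorem tendsto_sub_div_one_sub_rpow_sub {q : ℝ} (hq0 : 0 < q) (hq1 : q ≠ 1) (a : ℝ) :
    Tendsto (fun x : ℝ => (x - a) / (1 - q ^ (x - a))) (𝓝[≠] a) (𝓝 (-(Real.log q)⁻¹)) := by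
  have hderiv : HasDerivAt (fun x : ℝ => q ^ (x - a)) (Real.log q) a := by
    simpa using ((hasDerivAt_id' a).sub_const a).const_rpow hq0
  have hslope : Tendsto (fun x : ℝ => (q ^ (x - a) - 1) / (x - a)) (𝓝[≠] a) (𝓝 (Real.log q)) :=
    (hasDerivAt_iff_tendsto_slope.1 hderiv).congr fun x => by
      simp [slope_def_field]
  refine (hslope.inv₀ (Real.log_ne_zero_of_pos_of_ne_one hq0 hq1)).neg.congr fun x => ?_
  rw [inv_div, ← div_neg, neg_sub]

noncomputable def qZetaTerm (q z : ℝ) (ν : ℕ) (s : ℝ) (l : ℕ) : ℝ :=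
  (ascPochhammer ℝ l).eval s / l.factorial * q ^ (z * (s - ν + l)) / (1 - q ^ (s - ν + l))

section

variable {q z : ℝ} {ν n : ℕ}

theorem half_le_abs_sub_add_of_ne_sub (hnν : n ≤ ν) {s : ℝ} (hs : |s - n| < 1 / 2) {l : ℕ}
    (hl : l ≠ ν - n) : 1 / 2 ≤ |s - ν + l| := by
  rw [abs_sub_lt_iff] at hs
  rcases hl.lt_or_gt with h | h
  · have : (l : ℝ) + 1 + n ≤ ν := by exact_mod_cast (by omega : l + 1 + n ≤ ν)
    rw [abs_of_neg (by linarith)]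
    linarith
  · have : (ν : ℝ) + 1 ≤ n + l := by exact_mod_cast (by omega : ν + 1 ≤ n + l)
    rw [abs_of_pos (by linarith)]
    linarith

theorem abs_qZetaTerm_le (hq0 : 0 < q) (hq1 : q < 1) (hz : 0 < z) (hnν : n ≤ ν) {s : ℝ}
    (hs : |s - n| < 1 / 2) {l : ℕ} (hl : l ≠ ν - n) :
    |qZetaTerm q z ν s l| ≤
      q ^ (z * (n - 1 / 2 - ν)) / (1 - q ^ (1 / 2 : ℝ)) * ((l + n).choose n * (q ^ z) ^ l) := by
  have hs' := abs_sub_lt_iff.1 hs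
  have hpoch : |(ascPochhammer ℝ l).eval s / l.factorial| ≤ (l + n).choose n := by
    have hbound := abs_ascPochhammer_eval_le (t := ((n + 1 : ℕ) : ℝ))
      (by rw [abs_le]; push_cast; constructor <;> linarith [(n.cast_nonneg : (0 : ℝ) ≤ n)]) l
    rw [abs_div, Nat.abs_cast, div_le_iff₀ (by positivity)]
    calc |(ascPochhammer ℝ l).eval s| ≤ _ := hbound
      _ = (l + n).choose n * l.factorial := by
        rw [← div_mul_cancel₀ ((ascPochhammer ℝ l).eval _) (by positivity : (l.factorial : ℝ) ≠ 0),
          ascPochhammer_eval_natCast_div_factorial, ← Nat.choose_symm_add]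
        congr 3
        omega
  have hpow : q ^ (z * (s - ν + l)) ≤ q ^ (z * (n - 1 / 2 - ν)) * (q ^ z) ^ l := by
    rw [← Real.rpow_natCast, ← Real.rpow_mul hq0.le, ← Real.rpow_add hq0]
    exact Real.rpow_le_rpow_of_exponent_ge hq0 hq1.le (by nlinarith)
  have hden : 1 - q ^ (1 / 2 : ℝ) ≤ |1 - q ^ (s - ν + l)| :=
    le_trans (sub_le_sub_left (Real.rpow_le_rpow_of_exponent_ge hq0 hq1.le
      (half_le_abs_sub_add_of_ne_sub hnν hs hl)) 1)
      (one_sub_rpow_abs_le_abs_one_sub_rpow hq0 hq1.le _)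
  have hδ : 0 < 1 - q ^ (1 / 2 : ℝ) := sub_pos.2 (Real.rpow_lt_one hq0.le hq1 (by norm_num))
  rw [qZetaTerm, abs_div, abs_mul, abs_of_pos (Real.rpow_pos_of_pos hq0 _)]
  calc _ ≤ (l + n).choose n * (q ^ (z * (n - 1 / 2 - ν)) * (q ^ z) ^ l) /
        (1 - q ^ (1 / 2 : ℝ)) := by gcongr
    _ = _ := by ring

theorem tendsto_sub_mul_qZetaTerm_pole (hq0 : 0 < q) (hq1 : q < 1) (hnν : n ≤ ν) :
    Tendsto (fun s : ℝ => (s - n) * qZetaTerm q z ν s (ν - n)) (𝓝[≠] (n : ℝ))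
      (𝓝 (-((ν - 1).choose (ν - n) : ℝ) / Real.log q)) := by
  have hexponent : ∀ s : ℝ, s - ν + ((ν - n : ℕ) : ℝ) = s - n := fun s => by
    rw [Nat.cast_sub hnν]
    ring
  have hpoch : Tendsto (fun s : ℝ => (ascPochhammer ℝ (ν - n)).eval s / (ν - n).factorial)
      (𝓝[≠] (n : ℝ)) (𝓝 ((ν - 1).choose (ν - n))) := by
    have hval := ascPochhammer_eval_natCast_div_factorial n (ν - n)
    rw [show n + (ν - n) - 1 = ν - 1 by omega] at hval
    exact hval ▸ (((ascPochhammer ℝ (ν - n)).continuous.tendsto _).div_const _).mono_left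
      nhdsWithin_le_nhds
  have hpow : Tendsto (fun s : ℝ => q ^ (z * (s - n))) (𝓝[≠] (n : ℝ)) (𝓝 1) := by
    have hcont : Continuous (fun s : ℝ => q ^ (z * (s - n))) :=
      continuous_const.rpow (by fun_prop) fun _ => Or.inl hq0.ne'
    simpa using (hcont.tendsto (n : ℝ)).mono_left nhdsWithin_le_nhds
  have hlim := (hpoch.mul hpow).mul (tendsto_sub_div_one_sub_rpow_sub hq0 hq1.ne n)
  rw [mul_one, mul_neg, ← div_eq_mul_inv, ← neg_div] at hlim
  refine hlim.congr fun s => ?_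
  simp only [qZetaTerm, hexponent]
  ring

variable (hq0 : 0 < q) (hq1 : q < 1) (hz : 0 < z)
include hq0 hq1 hz

theorem hasSum_qZetaTerm_majorant :
    HasSum (fun l : ℕ => q ^ (z * (n - 1 / 2 - ν)) / (1 - q ^ (1 / 2 : ℝ)) *
        ((l + n).choose n * (q ^ z) ^ l))
      (q ^ (z * (n - 1 / 2 - ν)) / (1 - q ^ (1 / 2 : ℝ)) * (1 / (1 - q ^ z) ^ (n + 1))) := by
  refine (hasSum_choose_mul_geometric_of_norm_lt_one (𝕜 := ℝ) (r := q ^ z) n ?_).mul_left _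
  rw [Real.norm_of_nonneg (Real.rpow_nonneg hq0.le z)]
  exact Real.rpow_lt_one hq0.le hq1 hz

variable (hnν : n ≤ ν)
include hnν

theorem summable_qZetaTerm {s : ℝ} (hs : |s - n| < 1 / 2) : Summable (qZetaTerm q z ν s) := by
  refine (hasSum_qZetaTerm_majorant (ν := ν) (n := n) hq0 hq1 hz).summable
    |>.of_norm_bounded_eventually ?_
  filter_upwards [Set.finite_singleton (ν - n) |>.compl_mem_cofinite] with l hl
  exact abs_qZetaTerm_le hq0 hq1 hz hnν hs hl

theorem abs_tsum_ite_qZetaTerm_le {s : ℝ} (hs : |s - n| < 1 / 2) :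
    |∑' l, if l = ν - n then 0 else qZetaTerm q z ν s l| ≤
      q ^ (z * (n - 1 / 2 - ν)) / (1 - q ^ (1 / 2 : ℝ)) * (1 / (1 - q ^ z) ^ (n + 1)) := by
  rw [← Real.norm_eq_abs]
  refine tsum_of_norm_bounded (hasSum_qZetaTerm_majorant (ν := ν) (n := n) hq0 hq1 hz)
    fun l => ?_
  split_ifs with hl
  · rw [norm_zero]
    exact mul_nonneg (div_nonneg (Real.rpow_nonneg hq0.le _)
      (sub_nonneg.2 (Real.rpow_le_one hq0.le hq1.le (by norm_num)))) (by positivity)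
  · exact abs_qZetaTerm_le hq0 hq1 hz hnν hs hl

theorem tendsto_sub_mul_tsum_qZetaTerm :
    Tendsto (fun s : ℝ => (s - n) * ∑' l, qZetaTerm q z ν s l) (𝓝[≠] (n : ℝ))
      (𝓝 (-((ν - 1).choose (ν - n) : ℝ) / Real.log q)) := by
  have hnear : ∀ᶠ s : ℝ in 𝓝[≠] (n : ℝ), |s - n| < 1 / 2 :=
    nhdsWithin_le_nhds (eventually_abs_sub_lt _ (by norm_num))
  have hsplit : ∀ᶠ s : ℝ in 𝓝[≠] (n : ℝ), (s - n) * qZetaTerm q z ν s (ν - n) +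
      (s - n) * (∑' l, if l = ν - n then 0 else qZetaTerm q z ν s l) =
        (s - n) * ∑' l, qZetaTerm q z ν s l :=
    hnear.mono fun s hs => by
      rw [(summable_qZetaTerm hq0 hq1 hz hnν hs).tsum_eq_add_tsum_ite (ν - n), mul_add]
  have htail : Tendsto (fun s : ℝ => (s - n) * ∑' l, if l = ν - n then 0 else qZetaTerm q z ν s l)
      (𝓝[≠] (n : ℝ)) (𝓝 0) := by
    refine Tendsto.zero_mul_isBoundedUnder_le ?_ (isBoundedUnder_of_eventually_le
      (hnear.mono fun s hs => abs_tsum_ite_qZetaTerm_le hq0 hq1 hz hnν hs))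
    simpa using ((continuous_sub_right (n : ℝ)).tendsto n).mono_left nhdsWithin_le_nhds
  simpa only [add_zero] using ((tendsto_sub_mul_qZetaTerm_pole hq0 hq1 hnν).add htail).congr' hsplit

end

theorem qpow_ofReal {q : ℝ} (hq : 0 < q) (x : ℝ) : qpow q x = ((q ^ x : ℝ) : ℂ) := by
  rw [qpow, Real.rpow_def_of_pos hq, mul_comm, Complex.ofReal_exp, Complex.ofReal_mul]

theorem ascPochhammer_eval_ofReal (l : ℕ) (s : ℝ) :
    (ascPochhammer ℂ l).eval (s : ℂ) = (((ascPochhammer ℝ l).eval s : ℝ) : ℂ) := by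
  rw [ascPochhammer_eval₂ (algebraMap ℝ ℂ), ← Complex.coe_algebraMap, Polynomial.eval₂_at_apply]

theorem ofReal_qZetaTerm {q : ℝ} (hq : 0 < q) (z : ℝ) (ν : ℕ) (s : ℝ) (l : ℕ) :
    ((qZetaTerm q z ν s l : ℝ) : ℂ) = (ascPochhammer ℂ l).eval (s : ℂ) / (l.factorial : ℂ) *
      qpow q ((z : ℂ) * ((s : ℂ) - (ν : ℂ) + (l : ℂ))) /
        (1 - qpow q ((s : ℂ) - (ν : ℂ) + (l : ℂ))) := by
  have hexp : (z : ℂ) * ((s : ℂ) - (ν : ℂ) + (l : ℂ)) = ((z * (s - ν + l) : ℝ) : ℂ) := by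
    push_cast
    ring
  have harg : (s : ℂ) - (ν : ℂ) + (l : ℂ) = ((s - ν + l : ℝ) : ℂ) := by
    push_cast
    ring
  rw [hexp, harg, qpow_ofReal hq, qpow_ofReal hq, ascPochhammer_eval_ofReal, qZetaTerm]
  push_cast
  ring

theorem stmt17_general (q : ℝ) (hq0 : 0 < q) (hq1 : q < 1) (ν : ℕ)
    (z : ℝ) (hz : 0 < z) (n : ℕ) (hn2 : n ≤ ν) :
    Tendsto (fun s : ℝ =>
        ((s : ℂ) - (n : ℂ)) * (Complex.exp ((s : ℂ) * Real.log (1 - q)) *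
          ∑' l : ℕ, ((ascPochhammer ℂ l).eval (s : ℂ) / (Nat.factorial l : ℂ)) *
            qpow q ((z : ℂ) * ((s : ℂ) - (ν : ℂ) + (l : ℂ))) /
              (1 - qpow q ((s : ℂ) - (ν : ℂ) + (l : ℂ)))))
      (nhdsWithin ((n : ℝ)) {s : ℝ | ∀ k : ℤ, s ≠ (k : ℝ)})
      (nhds (-(Nat.choose (ν - 1) (ν - n) : ℂ) * (((1 - q) ^ n : ℝ) : ℂ) /
        (Real.log q : ℂ))) := by
  have hnonint : {s : ℝ | ∀ k : ℤ, s ≠ (k : ℝ)} ⊆ {(n : ℝ)}ᶜ := fun s hs => by simpa using hs n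
  have hexp : Tendsto (fun s : ℝ => Real.exp (s * Real.log (1 - q))) (𝓝 (n : ℝ))
      (𝓝 ((1 - q) ^ n)) := by
    have hval : Real.exp (n * Real.log (1 - q)) = (1 - q) ^ n := by
      rw [Real.exp_nat_mul, Real.exp_log (sub_pos.2 hq1)]
    exact hval ▸ (by fun_prop : Continuous fun s : ℝ => Real.exp (s * Real.log (1 - q))).tendsto _
  have hreal := ((hexp.mono_left nhdsWithin_le_nhds).mul
    (tendsto_sub_mul_tsum_qZetaTerm hq0 hq1 hz hn2)).mono_left (nhdsWithin_mono _ hnonint)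
  convert (Complex.continuous_ofReal.tendsto _).comp hreal using 2 with s
  · simp only [Function.comp_apply, ← ofReal_qZetaTerm hq0, ← Complex.ofReal_tsum]
    push_cast
    ring
  · push_cast
    ring

theorem stmt17 (q : ℝ) (hq0 : 0 < q) (hq1 : q < 1) (ν : ℕ) (hν : 0 < ν)
    (z : ℝ) (hz : 0 < z) (n : ℕ) (hn1 : 1 ≤ n) (hn2 : n ≤ ν) :
    Tendsto (fun s : ℝ =>
        ((s : ℂ) - (n : ℂ)) * (Complex.exp ((s : ℂ) * Real.log (1 - q)) *
          ∑' l : ℕ, ((ascPochhammer ℂ l).eval (s : ℂ) / (Nat.factorial l : ℂ)) *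
            qpow q ((z : ℂ) * ((s : ℂ) - (ν : ℂ) + (l : ℂ))) /
              (1 - qpow q ((s : ℂ) - (ν : ℂ) + (l : ℂ)))))
      (nhdsWithin ((n : ℝ)) {s : ℝ | ∀ k : ℤ, s ≠ (k : ℝ)})
      (nhds (-(Nat.choose (ν - 1) (ν - n) : ℂ) * (((1 - q) ^ n : ℝ) : ℂ) /
        (Real.log q : ℂ))) :=
  stmt17_general q hq0 hq1 ν z hz n hn2
end
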